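/- For every nonempty area sequence w of size n with bounce sequence b_1 … b_n, the number of positions of ψ(w) carrying the maximum value of ψ(w) equals b_n + 1; that is, |Maxb(ψ(w))| = b_n + 1. -/

import Mathlib

/-- The `i`-th letter of the word `w` (`1`-indexed, as in the paper);
defaults to `0` out of range. -/
def get1 (w : List ℕ) (i : ℕ) : ℕ := w.getD (i - 1) 0

/-- `w` is the area sequence of a Dyck path: the first letter is `0` and each
letter exceeds the previous one by at most one. -/
def IsAreaSeq (w : List ℕ) : Prop :=
  (w ≠ [] → get1 w 1 = 0) ∧ ∀ i, 1 ≤ i → i < w.length → get1 w (i + 1) ≤ get1 w i + 1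

/-- Insertion at position `i` (for `0 ≤ i ≤ n`): `ins w 0` prepends a `0`, and
for `1 ≤ i ≤ n`, `ins w i` inserts the letter `w_i + 1` just after position `i`. -/
def ins (w : List ℕ) (i : ℕ) : List ℕ :=
  w.take i ++ (if i = 0 then 0 else get1 w i + 1) :: w.drop i

/-- The area statistic: the sum of the letters. -/
def area (w : List ℕ) : ℕ := w.sum

/-- The dinv statistic: `dinv w = Σ_i d_i` where `d_i` is the number of `j > i`
with `w_j = w_i` or `w_j = w_i - 1`. -/
def dinv (w : List ℕ) : ℕ :=
  ∑ i ∈ Finset.Icc 1 w.length,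
    ((Finset.Ioc i w.length).filter
      (fun j => get1 w j = get1 w i ∨ get1 w j + 1 = get1 w i)).card

/-- The maximal value of a word (`0` for the empty word). -/
def maxVal (w : List ℕ) : ℕ := w.foldr max 0

/-- Positions of the letters of maximal value `m`. -/
def Maxb (w : List ℕ) : Finset ℕ :=
  (Finset.Icc 1 w.length).filter (fun i => get1 w i = maxVal w)

/-- Positions `i` with `w_i = m - 1` such that all letters after position `i`
are `< m`. -/
def Maxa (w : List ℕ) : Finset ℕ :=
  (Finset.Icc 1 w.length).filter (fun i =>
    get1 w i + 1 = maxVal w ∧ ∀ j ∈ Finset.Ioc i w.length, get1 w j < maxVal w)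

/-- The position of the leftmost letter equal to the maximal value `m` in the
rightmost block of consecutive letters equal to `m`. -/
def i0 (w : List ℕ) : ℕ :=
  ((Finset.Icc 1 w.length).filter (fun i =>
    get1 w i = maxVal w ∧ (i = 1 ∨ get1 w (i - 1) ≠ maxVal w))).sup id

/-- The admissible insertion positions of `w`, listed in admissible order:
the elements of `Maxb w` in decreasing order, then the elements of `Maxa w`
in decreasing order, then `i0 w - 1`.  The empty word has the single
admissible insertion position `0`. -/
def admissible (w : List ℕ) : List ℕ :=
  if w = [] then [0]
  else ((Maxb w).sort (· ≤ ·)).reverse ++ ((Maxa w).sort (· ≤ ·)).reverse ++ [i0 w - 1]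

/-- Auxiliary version of the map `ψ`, reading the reversed word. -/
def psiRev : List ℕ → List ℕ
  | [] => []
  | a :: u => ins (psiRev u) ((admissible (psiRev u)).getD a 0)

/-- The map `ψ`: `ψ(ε) = ε` and `ψ(u a) = ins_{c_a}(ψ(u))` where
`c_0, c_1, …, c_k` are the admissible insertion positions of `ψ(u)` in
admissible order. -/
def psi (w : List ℕ) : List ℕ := psiRev w.reverse

/-- The bounce sequence: `b_1 = 0`, and `b_i = b_{i-1} + 1` if
`b_{i-1} + 1 ≤ w_i`, otherwise `b_i = 0`. -/
def bseq (w : List ℕ) : ℕ → ℕ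
  | 0 => 0
  | 1 => 0
  | (i + 2) => if bseq w (i + 1) + 1 ≤ get1 w (i + 2) then bseq w (i + 1) + 1 else 0

/-- The bounces of `w`: positions `1 < i ≤ n` with `b_i = 0`. -/
def bounces (w : List ℕ) : Finset ℕ :=
  (Finset.Icc 2 w.length).filter (fun i => bseq w i = 0)

/-- The bounce statistic: the sum of the reversed positions `n - i + 1` of the
bounces of `w`. -/
def bounce (w : List ℕ) : ℕ := ∑ i ∈ bounces w, (w.length - i + 1)

/-!
Track two statistics of `ψ` along the prefixes of `w`: if the nonempty prefix `u` ends with the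
letter `p` and has last bounce value `b`, then `ψ u` has `b + 1` letters of maximal value `m`
and `#(Maxa (ψ u)) = p - b`. Appending a letter `a ≤ p + 1` inserts at the `a`-th admissible
position.
* For `a ≤ b` this is a position of `Maxb` followed by exactly `a` others: the new letter `m + 1`
  is the unique maximum and the `a` letters `m` after it form the new `Maxa`, matching the
  bounce sequence dropping to `0`.
* For `b < a ≤ p` it is a position of `Maxa` followed by exactly `a - b - 1` others, and for
  `a = p + 1` it is `i0 - 1`. Either way a letter `m` is inserted, so `Maxb` grows by one while
  `Maxa` shrinks to those `a - b - 1` positions, resp. stays of size `p - b`, matching the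
  bounce sequence increasing to `b + 1`.
-/

open Finset

def insLetter (w : List ℕ) (i : ℕ) : ℕ := if i = 0 then 0 else get1 w i + 1

section Insertion

variable {v : List ℕ} {c : ℕ}

lemma ins_eq_take_append (v : List ℕ) (c : ℕ) :
    ins v c = v.take c ++ insLetter v c :: v.drop c := rfl

lemma length_ins (hc : c ≤ v.length) : (ins v c).length = v.length + 1 := by
  simp only [ins, List.length_append, List.length_take, List.length_cons, List.length_drop]
  omega

lemma ins_perm (v : List ℕ) (c : ℕ) : (ins v c).Perm (insLetter v c :: v) := by
  rw [ins_eq_take_append]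
  simpa only [List.take_append_drop] using
    (List.perm_middle (a := insLetter v c) (l₁ := v.take c) (l₂ := v.drop c))

lemma get1_ins_of_le {j : ℕ} (hj : 1 ≤ j) (hjc : j ≤ c) (hc : c ≤ v.length) :
    get1 (ins v c) j = get1 v j := by
  simp only [get1, ins_eq_take_append, List.getD_eq_getElem?_getD]
  rw [List.getElem?_append_left (by simp; omega), List.getElem?_take_of_lt (by omega)]

lemma get1_ins_succ (hc : c ≤ v.length) : get1 (ins v c) (c + 1) = insLetter v c := by
  simp [get1, ins_eq_take_append, List.getD_eq_getElem?_getD, hc]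

lemma get1_ins_of_lt {j : ℕ} (hcj : c + 1 < j) (hc : c ≤ v.length) :
    get1 (ins v c) j = get1 v (j - 1) := by
  simp only [get1, ins_eq_take_append, List.getD_eq_getElem?_getD]
  rw [List.getElem?_append_right (by simp; omega)]
  obtain ⟨k, rfl⟩ : ∃ k, j = c + 2 + k := ⟨j - (c + 2), by omega⟩
  simp [List.length_take, hc, show c + 1 + k - c = k + 1 by omega, add_comm c k]

lemma isAreaSeq_ins (hv : IsAreaSeq v) (hc : c ≤ v.length) :
    IsAreaSeq (ins v c) := by
  constructor
  · intro _
    rcases Nat.eq_zero_or_pos c with rfl | hc0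
    · simpa [insLetter] using get1_ins_succ hc
    · rw [get1_ins_of_le le_rfl hc0 hc]
      exact hv.1 (List.ne_nil_of_length_pos (by omega))
  · intro i hi hlen
    rw [length_ins hc] at hlen
    obtain h | rfl | rfl | h : i + 1 ≤ c ∨ i = c ∨ i = c + 1 ∨ c + 2 ≤ i := by omega
    · rw [get1_ins_of_le (by omega) h hc, get1_ins_of_le hi (by omega) hc]
      exact hv.2 i hi (by omega)
    · rw [get1_ins_succ hc, get1_ins_of_le hi le_rfl hc, insLetter, if_neg (by omega)]
    · rw [get1_ins_of_lt (by omega) hc, get1_ins_succ hc, Nat.add_sub_cancel, insLetter]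
      split_ifs with h0
      · subst h0
        simp [hv.1 (List.ne_nil_of_length_pos (by omega))]
      · exact (hv.2 c (by omega) (by omega)).trans (Nat.le_succ _)
    · rw [get1_ins_of_lt (by omega) hc, get1_ins_of_lt (by omega) hc]
      simpa [Nat.sub_add_cancel (by omega : 1 ≤ i)] using hv.2 (i - 1) (by omega) (by omega)

end Insertion

lemma get1_append {u : List ℕ} {a i : ℕ} (hi : 1 ≤ i) (h : i ≤ u.length) :
    get1 (u ++ [a]) i = get1 u i := by
  simp only [get1, List.getD_eq_getElem?_getD,
    List.getElem?_append_left (show i - 1 < u.length by omega)]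

lemma get1_append_length (u : List ℕ) (a : ℕ) : get1 (u ++ [a]) (u.length + 1) = a := by
  simp [get1]

lemma le_maxVal {w : List ℕ} {a : ℕ} (h : a ∈ w) : a ≤ maxVal w :=
  List.le_max_of_le h le_rfl

lemma maxVal_mem {w : List ℕ} (h : w ≠ []) : maxVal w ∈ w :=
  List.maximum_mem (List.foldr_max_of_ne_nil h).symm

lemma List.Perm.maxVal_eq {w w' : List ℕ} (h : w.Perm w') : maxVal w = maxVal w' :=
  h.foldr_eq 0

lemma get1_le_maxVal (w : List ℕ) (i : ℕ) : get1 w i ≤ maxVal w := by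
  rw [get1, List.getD_eq_getElem?_getD]
  cases h : w[i - 1]? with
  | none => exact Nat.zero_le _
  | some a => exact le_maxVal (List.mem_of_getElem? h)

lemma maxVal_ins (v : List ℕ) (c : ℕ) :
    maxVal (ins v c) = max (insLetter v c) (maxVal v) :=
  (ins_perm v c).maxVal_eq

lemma card_filter_get1_eq_count (w : List ℕ) (x : ℕ) :
    #{i ∈ Icc 1 w.length | get1 w i = x} = w.count x := by
  induction w using List.reverseRecOn with
  | nil => simp
  | append_singleton u a ih =>
    have hu : #{i ∈ Icc 1 u.length | get1 (u ++ [a]) i = x} = u.count x := by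
      rw [← ih]
      congr 1
      exact filter_congr fun i hi => by rw [get1_append (mem_Icc.1 hi).1 (mem_Icc.1 hi).2]
    rw [List.length_append, List.length_singleton, ← insert_Icc_right_eq_Icc_add_one (by omega),
      filter_insert, get1_append_length, List.count_append, List.count_singleton]
    by_cases hax : a = x
    · rw [if_pos hax, if_pos (beq_iff_eq.2 hax), card_insert_of_notMem (by simp), hu]
    · rw [if_neg hax, if_neg (by simpa using hax), hu, add_zero]

lemma card_Maxb (w : List ℕ) : #(Maxb w) = w.count (maxVal w) :=
  card_filter_get1_eq_count w _

lemma mem_Maxb {w : List ℕ} {i : ℕ} :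
    i ∈ Maxb w ↔ (1 ≤ i ∧ i ≤ w.length) ∧ get1 w i = maxVal w := by
  simp [Maxb]

lemma Maxb_nonempty {w : List ℕ} (h : w ≠ []) : (Maxb w).Nonempty :=
  card_pos.1 (by rw [card_Maxb]; exact List.count_pos_iff.2 (maxVal_mem h))

lemma card_Maxb_ins_of_maxVal_lt {v : List ℕ} {c : ℕ} (h : maxVal v < insLetter v c) :
    #(Maxb (ins v c)) = 1 := by
  rw [card_Maxb, maxVal_ins, max_eq_left h.le, (ins_perm v c).count_eq, List.count_cons_self,
    List.count_eq_zero.2 fun hmem => (le_maxVal hmem).not_gt h]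

lemma card_Maxb_ins_of_eq_maxVal {v : List ℕ} {c : ℕ} (h : insLetter v c = maxVal v) :
    #(Maxb (ins v c)) = #(Maxb v) + 1 := by
  rw [card_Maxb, card_Maxb, maxVal_ins, h, max_self, (ins_perm v c).count_eq, h,
    List.count_cons_self]

/-- The position of the last letter of maximal value (`0` for the empty word). -/
def lastMax (w : List ℕ) : ℕ := (Maxb w).sup id

section LastMax

variable {v : List ℕ} {c : ℕ}

lemma le_lastMax {i : ℕ} (h : i ∈ Maxb v) : i ≤ lastMax v :=
  le_sup (f := id) h

lemma lastMax_mem_Maxb (h : v ≠ []) : lastMax v ∈ Maxb v := by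
  obtain ⟨i, hi, he⟩ := (Maxb v).exists_mem_eq_sup (Maxb_nonempty h) id
  rwa [lastMax, he]

lemma get1_lt_maxVal_of_lastMax_lt {j : ℕ} (h : lastMax v < j) (hj : j ≤ v.length) :
    get1 v j < maxVal v :=
  (get1_le_maxVal v j).lt_of_ne fun he =>
    (le_lastMax (mem_Maxb.2 ⟨⟨by omega, hj⟩, he⟩)).not_gt h

lemma Maxa_eq_filter_Ioc_lastMax (v : List ℕ) :
    Maxa v = {i ∈ Ioc (lastMax v) v.length | get1 v i + 1 = maxVal v} := by
  ext i
  simp only [Maxa, mem_filter, mem_Icc, mem_Ioc]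
  constructor
  · rintro ⟨⟨hi, hin⟩, hval, hafter⟩
    refine ⟨⟨?_, hin⟩, hval⟩
    have hne : v ≠ [] := List.ne_nil_of_length_pos (by omega)
    obtain ⟨⟨-, hLn⟩, hL⟩ := mem_Maxb.1 (lastMax_mem_Maxb hne)
    by_contra! hle
    rcases hle.lt_or_eq with hlt | rfl
    · exact (hafter _ ⟨hlt, hLn⟩).ne hL
    · omega
  · rintro ⟨⟨hlt, hin⟩, hval⟩
    exact ⟨⟨by omega, hin⟩, hval, fun j hj => get1_lt_maxVal_of_lastMax_lt (by omega) hj.2⟩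

lemma card_filter_Ioc_ins (p : ℕ → Prop) [DecidablePred p] {t : ℕ} (hct : c ≤ t)
    (hc : c ≤ v.length) :
    #{i ∈ Ioc (t + 1) (v.length + 1) | p (get1 (ins v c) i)} =
      #{i ∈ Ioc t v.length | p (get1 v i)} := by
  refine card_nbij' (· - 1) (· + 1) ?_ ?_ ?_ ?_
  · intro i hi
    simp only [coe_filter, mem_Ioc, Set.mem_ofPred_eq] at hi ⊢
    rw [get1_ins_of_lt (by omega) hc] at hi
    exact ⟨⟨by omega, by omega⟩, hi.2⟩
  · intro j hj
    simp only [coe_filter, mem_Ioc, Set.mem_ofPred_eq] at hj ⊢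
    rw [get1_ins_of_lt (by omega) hc, Nat.add_sub_cancel]
    exact ⟨⟨by omega, by omega⟩, hj.2⟩
  · intro i hi
    simp only [coe_filter, mem_Ioc, Set.mem_ofPred_eq] at hi
    exact Nat.sub_add_cancel (by omega)
  · intro j _
    simp

lemma lastMax_ins_of_forall_lt (hc : c ≤ v.length) (hmax : maxVal (ins v c) = insLetter v c)
    (hlt : ∀ j, c < j → j ≤ v.length → get1 v j < insLetter v c) :
    lastMax (ins v c) = c + 1 := by
  refine le_antisymm (Finset.sup_le fun j hj => ?_) (le_lastMax ?_)
  · rw [mem_Maxb, length_ins hc, hmax] at hj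
    change j ≤ c + 1
    by_contra! hcj
    rw [get1_ins_of_lt hcj hc] at hj
    exact (hlt (j - 1) (by omega) (by omega)).ne hj.2
  · rw [mem_Maxb, length_ins hc, hmax, get1_ins_succ hc]
    exact ⟨⟨by omega, by omega⟩, rfl⟩

lemma lastMax_ins_of_lt (hc : c < lastMax v) (hmax : maxVal (ins v c) = maxVal v) :
    lastMax (ins v c) = lastMax v + 1 := by
  have hne : v ≠ [] := by rintro rfl; simp [lastMax, Maxb] at hc
  obtain ⟨⟨hL1, hLn⟩, hL⟩ := mem_Maxb.1 (lastMax_mem_Maxb hne)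
  have hcn : c ≤ v.length := by omega
  refine le_antisymm (Finset.sup_le fun j hj => ?_) (le_lastMax ?_)
  · rw [mem_Maxb, length_ins hcn, hmax] at hj
    change j ≤ lastMax v + 1
    by_contra! hLj
    rw [get1_ins_of_lt (by omega) hcn] at hj
    exact (get1_lt_maxVal_of_lastMax_lt (by omega) (by omega)).ne hj.2
  · rw [mem_Maxb, length_ins hcn, hmax, get1_ins_of_lt (by omega) hcn, Nat.add_sub_cancel]
    exact ⟨⟨by omega, by omega⟩, hL⟩

end LastMax

section Cases

variable {v : List ℕ} {c : ℕ}

lemma card_Maxa_ins_of_mem_Maxb (hc : c ∈ Maxb v) :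
    #(Maxa (ins v c)) = #{x ∈ Maxb v | c < x} := by
  obtain ⟨⟨hc1, hcn⟩, hcv⟩ := mem_Maxb.1 hc
  have hletter : insLetter v c = maxVal v + 1 := by rw [insLetter, if_neg (by omega), hcv]
  have hmax : maxVal (ins v c) = maxVal v + 1 := by rw [maxVal_ins, hletter]; omega
  have hlast : lastMax (ins v c) = c + 1 :=
    lastMax_ins_of_forall_lt hcn (hmax.trans hletter.symm)
      fun j _ _ => hletter ▸ Nat.lt_succ_of_le (get1_le_maxVal v j)
  rw [Maxa_eq_filter_Ioc_lastMax, hlast, length_ins hcn, hmax,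
    card_filter_Ioc_ins (fun x => x + 1 = maxVal v + 1) le_rfl hcn]
  congr 1
  ext i
  simp only [Maxb, mem_filter, mem_Ioc, mem_Icc]
  omega

lemma card_Maxa_ins_of_mem_Maxa (hc : c ∈ Maxa v) :
    #(Maxa (ins v c)) = #{x ∈ Maxa v | c < x} := by
  rw [Maxa_eq_filter_Ioc_lastMax, mem_filter, mem_Ioc] at hc
  obtain ⟨⟨hLc, hcn⟩, hcv⟩ := hc
  have hletter : insLetter v c = maxVal v := by rw [insLetter, if_neg (by omega), hcv]
  have hmax : maxVal (ins v c) = maxVal v := by rw [maxVal_ins, hletter, max_self]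
  have hlast : lastMax (ins v c) = c + 1 :=
    lastMax_ins_of_forall_lt hcn (hmax.trans hletter.symm)
      fun j hcj hj => hletter ▸ get1_lt_maxVal_of_lastMax_lt (by omega) hj
  rw [Maxa_eq_filter_Ioc_lastMax, hlast, length_ins hcn, hmax,
    card_filter_Ioc_ins (fun x => x + 1 = maxVal v) le_rfl hcn, Maxa_eq_filter_Ioc_lastMax]
  congr 1
  ext i
  simp only [mem_filter, mem_Ioc]
  omega

lemma card_Maxa_ins_of_lt_lastMax (hc : c < lastMax v) (hletter : insLetter v c = maxVal v) :
    #(Maxa (ins v c)) = #(Maxa v) := by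
  have hmax : maxVal (ins v c) = maxVal v := by rw [maxVal_ins, hletter, max_self]
  have hcn : c ≤ v.length := hc.le.trans (Finset.sup_le fun j hj => (mem_Maxb.1 hj).1.2)
  rw [Maxa_eq_filter_Ioc_lastMax, lastMax_ins_of_lt hc hmax, length_ins hcn, hmax,
    card_filter_Ioc_ins (fun x => x + 1 = maxVal v) hc.le hcn, Maxa_eq_filter_Ioc_lastMax]

end Cases

section I0

variable {v : List ℕ}

lemma i0_mem (hne : v ≠ []) :
    i0 v ∈ {i ∈ Icc 1 v.length |
      get1 v i = maxVal v ∧ (i = 1 ∨ get1 v (i - 1) ≠ maxVal v)} := by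
  -- the first letter of maximal value starts a block of maximal letters
  have hS : ({i ∈ Icc 1 v.length | get1 v i = maxVal v ∧
      (i = 1 ∨ get1 v (i - 1) ≠ maxVal v)} : Finset ℕ).Nonempty := by
    set j := (Maxb v).min' (Maxb_nonempty hne)
    obtain ⟨⟨hj1, hjn⟩, hj⟩ := mem_Maxb.1 ((Maxb v).min'_mem (Maxb_nonempty hne))
    refine ⟨j, mem_filter.2 ⟨mem_Icc.2 ⟨hj1, hjn⟩, hj,
      or_iff_not_imp_left.2 fun hj1' hprev => ?_⟩⟩
    have := (Maxb v).min'_le (j - 1) (mem_Maxb.2 ⟨⟨by omega, by omega⟩, hprev⟩)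
    omega
  obtain ⟨i, hi, he⟩ := exists_mem_eq_sup _ hS id
  rwa [i0, he]

lemma i0_mem_Maxb (hne : v ≠ []) : i0 v ∈ Maxb v := by
  have := mem_filter.1 (i0_mem hne)
  exact mem_filter.2 ⟨this.1, this.2.1⟩

lemma insLetter_i0_pred (hv : IsAreaSeq v) (hne : v ≠ []) :
    insLetter v (i0 v - 1) = maxVal v := by
  obtain ⟨hi, hival, hstart⟩ := mem_filter.1 (i0_mem hne)
  rw [mem_Icc] at hi
  rw [insLetter]
  split_ifs with h0
  · rw [← hival, show i0 v = 1 by omega, hv.1 hne]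
  · have hstep := hv.2 (i0 v - 1) (by omega) (by omega)
    rw [Nat.sub_add_cancel hi.1] at hstep
    have := get1_le_maxVal v (i0 v - 1)
    have := hstart.resolve_left (by omega)
    omega

lemma i0_pred_lt_lastMax (hne : v ≠ []) : i0 v - 1 < lastMax v := by
  have := le_lastMax (i0_mem_Maxb hne)
  have := (mem_Maxb.1 (i0_mem_Maxb hne)).1.1
  omega

end I0

lemma List.countP_getElem_lt {α : Type*} [LinearOrder α] {l : List α}
    (h : l.Pairwise (· < ·)) {i : ℕ} (hi : i < l.length) :
    l.countP (fun y => l[i] < y) = l.length - 1 - i := by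
  induction l generalizing i with
  | nil => simp at hi
  | cons y t ih =>
    rw [List.pairwise_cons] at h
    cases i with
    | zero =>
      rw [List.countP_cons, List.countP_eq_length.2 fun z hz => by simpa using h.1 z hz]
      simp
    | succ j =>
      have hj : j < t.length := by simpa using hi
      have hyj : y < t[j] := h.1 _ (List.getElem_mem hj)
      rw [List.countP_cons, List.getElem_cons_succ, ih h.2 hj]
      simp [hyj.not_gt]
      omega

lemma card_filter_lt_getD_reverse_sort {α : Type*} [LinearOrder α] (s : Finset α) {k : ℕ}
    (hk : k < #s) (d : α) :
    (s.sort (· ≤ ·)).reverse.getD k d ∈ s ∧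
      #{x ∈ s | (s.sort (· ≤ ·)).reverse.getD k d < x} = k := by
  set l := s.sort (· ≤ ·)
  have hlen : l.length = #s := length_sort _
  have he : l.reverse.getD k d = l[l.length - 1 - k] := by
    rw [List.getD_eq_getElem _ _ (by simpa [hlen] using hk), List.getElem_reverse]
  rw [he]
  refine ⟨(mem_sort _).1 (List.getElem_mem _), ?_⟩
  have hcount :
      #{x ∈ s | l[l.length - 1 - k] < x} = l.countP (fun y => l[l.length - 1 - k] < y) := by
    rw [← Multiset.coe_countP, sort_eq, Multiset.countP_eq_card_filter]
    rfl
  rw [hcount, List.countP_getElem_lt (l := l) (sortedLT_sort s).pairwise]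
  omega

section Admissible

variable {v : List ℕ} {a : ℕ}

lemma admissible_eq (hne : v ≠ []) :
    admissible v = ((Maxb v).sort (· ≤ ·)).reverse ++
      (((Maxa v).sort (· ≤ ·)).reverse ++ [i0 v - 1]) := by
  rw [admissible, if_neg hne, List.append_assoc]

lemma admissible_getD_of_lt_card_Maxb (hne : v ≠ []) (ha : a < #(Maxb v)) :
    (admissible v).getD a 0 ∈ Maxb v ∧
      #{x ∈ Maxb v | (admissible v).getD a 0 < x} = a := by
  rw [admissible_eq hne, List.getD_append _ _ _ _ (by simpa using ha)]
  exact card_filter_lt_getD_reverse_sort _ ha 0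

lemma admissible_getD_of_lt_card_Maxa (hne : v ≠ []) (hba : #(Maxb v) ≤ a)
    (ha : a < #(Maxb v) + #(Maxa v)) :
    (admissible v).getD a 0 ∈ Maxa v ∧
      #{x ∈ Maxa v | (admissible v).getD a 0 < x} = a - #(Maxb v) := by
  rw [admissible_eq hne, List.getD_append_right _ _ _ _ (by simpa using hba),
    List.getD_append _ _ _ _ (by simp; omega), List.length_reverse, length_sort]
  exact card_filter_lt_getD_reverse_sort _ (by omega) 0

lemma admissible_getD_card (hne : v ≠ []) :
    (admissible v).getD (#(Maxb v) + #(Maxa v)) 0 = i0 v - 1 := by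
  rw [admissible_eq hne, List.getD_append_right _ _ _ _ (by simp),
    List.getD_append_right _ _ _ _ (by simp)]
  simp

lemma admissible_getD_le_length (v : List ℕ) (a : ℕ) :
    (admissible v).getD a 0 ≤ v.length := by
  rw [List.getD_eq_getElem?_getD]
  cases h : (admissible v)[a]? with
  | none => exact Nat.zero_le _
  | some c =>
    have hc := List.mem_of_getElem? h
    rw [admissible] at hc
    split_ifs at hc with hne
    · simp_all
    · simp only [List.mem_append, List.mem_reverse, mem_sort, List.mem_singleton] at hc
      rcases hc with (hc | hc) | rfl
      · exact (mem_Maxb.1 hc).1.2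
      · exact (mem_Icc.1 (mem_filter.1 hc).1).2
      · exact (Nat.sub_le _ _).trans
          (Finset.sup_le fun i hi => (mem_Icc.1 (mem_filter.1 hi).1).2)

end Admissible

lemma card_Maxb_Maxa_ins_admissible {v : List ℕ} (hv : IsAreaSeq v) (hne : v ≠ []) {a : ℕ}
    (ha : a ≤ #(Maxb v) + #(Maxa v)) :
    #(Maxb (ins v ((admissible v).getD a 0))) =
        (if #(Maxb v) ≤ a then #(Maxb v) else 0) + 1 ∧
      #(Maxa (ins v ((admissible v).getD a 0))) =
        a - (if #(Maxb v) ≤ a then #(Maxb v) else 0) := by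
  obtain hlt | ⟨hle, hlt⟩ | rfl : a < #(Maxb v) ∨
      (#(Maxb v) ≤ a ∧ a < #(Maxb v) + #(Maxa v)) ∨ a = #(Maxb v) + #(Maxa v) := by omega
  · obtain ⟨hc, hcard⟩ := admissible_getD_of_lt_card_Maxb hne hlt
    obtain ⟨⟨hc1, -⟩, hcv⟩ := mem_Maxb.1 hc
    rw [if_neg (by omega), card_Maxa_ins_of_mem_Maxb hc, hcard,
      card_Maxb_ins_of_maxVal_lt (by rw [insLetter, if_neg (by omega), hcv]; omega)]
    simp
  · obtain ⟨hc, hcard⟩ := admissible_getD_of_lt_card_Maxa hne hle hlt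
    have hletter : insLetter v ((admissible v).getD a 0) = maxVal v := by
      obtain ⟨hcIcc, hcv, -⟩ := mem_filter.1 hc
      rw [insLetter, if_neg (Nat.one_le_iff_ne_zero.1 (mem_Icc.1 hcIcc).1), hcv]
    rw [if_pos hle, card_Maxa_ins_of_mem_Maxa hc, hcard, card_Maxb_ins_of_eq_maxVal hletter]
    simp
  · rw [if_pos (by omega), admissible_getD_card hne,
      card_Maxb_ins_of_eq_maxVal (insLetter_i0_pred hv hne),
      card_Maxa_ins_of_lt_lastMax (i0_pred_lt_lastMax hne) (insLetter_i0_pred hv hne)]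
    simp

lemma psi_append (u : List ℕ) (a : ℕ) :
    psi (u ++ [a]) = ins (psi u) ((admissible (psi u)).getD a 0) := by
  rw [psi, List.reverse_append]
  rfl

lemma length_psi (w : List ℕ) : (psi w).length = w.length := by
  induction w using List.reverseRecOn with
  | nil => rfl
  | append_singleton u a ih =>
    rw [psi_append, length_ins (admissible_getD_le_length _ a), ih, List.length_append,
      List.length_singleton]

lemma isAreaSeq_psi (w : List ℕ) : IsAreaSeq (psi w) := by
  induction w using List.reverseRecOn with
  | nil => exact ⟨fun h => absurd rfl h, fun i hi hlen => by simp [psi, psiRev] at hlen⟩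
  | append_singleton u a ih =>
    rw [psi_append]
    exact isAreaSeq_ins ih (admissible_getD_le_length _ a)

lemma IsAreaSeq.of_append {u : List ℕ} {a : ℕ} (h : IsAreaSeq (u ++ [a])) : IsAreaSeq u := by
  refine ⟨fun hu => ?_, fun i hi hlen => ?_⟩
  · rw [← get1_append le_rfl (List.length_pos_iff.2 hu)]
    exact h.1 (by simp)
  · rw [← get1_append (by omega) hlen, ← get1_append hi hlen.le]
    exact h.2 i hi (by simp; omega)

lemma IsAreaSeq.le_succ_of_append {u : List ℕ} {a : ℕ} (h : IsAreaSeq (u ++ [a]))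
    (hu : u ≠ []) : a ≤ get1 u u.length + 1 := by
  have hn := List.length_pos_iff.2 hu
  simpa [get1_append_length, get1_append hn le_rfl] using h.2 u.length hn (by simp)

lemma bseq_le_get1 (w : List ℕ) {i : ℕ} (hi : 1 ≤ i) : bseq w i ≤ get1 w i := by
  match i, hi with
  | 1, _ => simp [bseq]
  | k + 2, _ => rw [bseq]; split_ifs <;> omega

lemma bseq_append_of_le (u : List ℕ) (a : ℕ) {i : ℕ} (hi : i ≤ u.length) :
    bseq (u ++ [a]) i = bseq u i := by
  induction i with
  | zero => rfl
  | succ k ih =>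
    match k, ih with
    | 0, _ => rfl
    | k + 1, ih => rw [bseq, bseq, ih (by omega), get1_append (by omega) hi]

lemma bseq_append_length {u : List ℕ} (hu : u ≠ []) (a : ℕ) :
    bseq (u ++ [a]) (u.length + 1) =
      if bseq u u.length + 1 ≤ a then bseq u u.length + 1 else 0 := by
  obtain ⟨n, hn⟩ : ∃ n, u.length = n + 1 := Nat.exists_eq_succ_of_ne_zero (by simpa using hu)
  rw [hn, bseq, ← hn, bseq_append_of_le u a le_rfl, show n + 2 = u.length + 1 by omega,
    get1_append_length]

theorem card_Maxb_Maxa_psi {w : List ℕ} (hw : IsAreaSeq w) (hne : w ≠ []) :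
    #(Maxb (psi w)) = bseq w w.length + 1 ∧
      #(Maxa (psi w)) = get1 w w.length - bseq w w.length := by
  induction w using List.reverseRecOn with
  | nil => exact absurd rfl hne
  | append_singleton u a ih =>
    rcases eq_or_ne u [] with rfl | hu
    · obtain rfl : a = 0 := by simpa [get1] using hw.1 hne
      decide
    obtain ⟨hB, hA⟩ := ih hw.of_append hu
    have hn : 0 < u.length := List.length_pos_iff.2 hu
    have hv : psi u ≠ [] := List.ne_nil_of_length_pos (by rwa [length_psi])
    have ha : a ≤ #(Maxb (psi u)) + #(Maxa (psi u)) := by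
      have := hw.le_succ_of_append hu
      have := bseq_le_get1 u hn
      omega
    rw [psi_append, List.length_append, List.length_singleton, bseq_append_length hu,
      get1_append_length, ← hB]
    exact card_Maxb_Maxa_ins_admissible (isAreaSeq_psi u) hv ha

/-- For a nonempty area sequence `w` of size `n` with bounce sequence
`b_1 … b_n`, the number of positions of `ψ w` carrying the maximal value is
`b_n + 1`. -/
theorem card_Maxb_psi (w : List ℕ) (hw : IsAreaSeq w) (hne : w ≠ []) :
    (Maxb (psi w)).card = bseq w w.length + 1 :=
  (card_Maxb_Maxa_psi hw hne).1
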